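/- arXiv:2309.05554 — 2 statements merged into one kernel-verified Lean document; each statement's English description precedes it below -/
import Mathlib

section
/- If g : {0,1}^n → ℝ is monotone non-decreasing and supermodular and λ > 0, then the function (X_2,...,X_n) ↦ exp(λ·g(1,X_2,...,X_n)) − exp(λ·g(0,X_2,...,X_n)) is non-negative and monotone non-decreasing in (X_2,...,X_n) under the coordinatewise order on {0,1}^{n−1}. -/
open MeasureTheory ProbabilityTheory Real Finset

/-- A vector is binary if each coordinate is 0 or 1. -/
def BinaryVec {m : ℕ} (x : Fin m → ℝ) : Prop := ∀ i, x i = 0 ∨ x i = 1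

/-- Monotone non-decreasing on the Boolean cube. -/
def MonoCube {m : ℕ} (f : (Fin m → ℝ) → ℝ) : Prop :=
  ∀ x y : Fin m → ℝ, BinaryVec x → BinaryVec y → x ≤ y → f x ≤ f y

/-- Submodular on the Boolean cube: marginal gains are coordinatewise non-increasing. -/
def SubmodCube {m : ℕ} (f : (Fin m → ℝ) → ℝ) : Prop :=
  ∀ (i : Fin m) (x y : Fin m → ℝ), BinaryVec x → BinaryVec y → x ≤ y →
    f (Function.update y i 1) - f (Function.update y i 0) ≤
      f (Function.update x i 1) - f (Function.update x i 0)

/-- Supermodular on the Boolean cube: marginal gains are coordinatewise non-decreasing. -/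
def SupermodCube {m : ℕ} (f : (Fin m → ℝ) → ℝ) : Prop :=
  ∀ (i : Fin m) (x y : Fin m → ℝ), BinaryVec x → BinaryVec y → x ≤ y →
    f (Function.update x i 1) - f (Function.update x i 0) ≤
      f (Function.update y i 1) - f (Function.update y i 0)

/-- 1-negative association for binary random variables: for every coordinate `i`,
every monotone `F` depending only on coordinates `≠ i` and every monotone `G` of `X i`,
`E[F·G] ≤ E[F]·E[G]`. -/
def OneNA {Ω : Type*} [MeasurableSpace Ω] (μ : Measure Ω) {m : ℕ} (X : Fin m → Ω → ℝ) : Prop :=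
  ∀ (i : Fin m) (F : (Fin m → ℝ) → ℝ) (G : ℝ → ℝ),
    Measurable F → MonoCube F →
    (∀ x y : Fin m → ℝ, (∀ j, j ≠ i → x j = y j) → F x = F y) →
    Measurable G → Monotone G →
    ∫ ω, F (fun j => X j ω) * G (X i ω) ∂μ ≤
      (∫ ω, F (fun j => X j ω) ∂μ) * ∫ ω, G (X i ω) ∂μ

lemma binary_update {m : ℕ} {x : Fin m → ℝ} (hx : BinaryVec x) (i : Fin m) {c : ℝ}
    (hc : c = 0 ∨ c = 1) : BinaryVec (Function.update x i c) := by
  intro j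
  rcases eq_or_ne j i with rfl | h
  · simpa using hc
  · simpa [Function.update_of_ne h] using hx j

lemma update_le_update {m : ℕ} {x y : Fin m → ℝ} (hxy : x ≤ y) (i : Fin m) {c d : ℝ}
    (hcd : c ≤ d) : Function.update x i c ≤ Function.update y i d := by
  intro j
  rcases eq_or_ne j i with rfl | h
  · simpa using hcd
  · simpa [Function.update_of_ne h] using hxy j

/-- For monotone supermodular g and λ > 0, the function
x ↦ exp(λ·g(x with xᵢ=1)) − exp(λ·g(x with xᵢ=0)) is non-negative and
monotone non-decreasing on the Boolean cube. -/
theorem supermodular_exp_diff_nonneg_monotone {n : ℕ} (g : (Fin n → ℝ) → ℝ)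
    (hmono : MonoCube g) (hsup : SupermodCube g) (l : ℝ) (hl : 0 < l) (i : Fin n) :
    (∀ x : Fin n → ℝ, BinaryVec x →
      0 ≤ Real.exp (l * g (Function.update x i 1)) - Real.exp (l * g (Function.update x i 0))) ∧
    (∀ x y : Fin n → ℝ, BinaryVec x → BinaryVec y → x ≤ y →
      Real.exp (l * g (Function.update x i 1)) - Real.exp (l * g (Function.update x i 0)) ≤
        Real.exp (l * g (Function.update y i 1)) - Real.exp (l * g (Function.update y i 0))) := by
  have key : ∀ x y : Fin n → ℝ, BinaryVec x → BinaryVec y → x ≤ y →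
      Real.exp (l * g (Function.update x i 1)) - Real.exp (l * g (Function.update x i 0)) ≤
        Real.exp (l * g (Function.update y i 1)) - Real.exp (l * g (Function.update y i 0)) := by
    intro x y hx hy hxy
    set a0 := l * g (Function.update x i 0)
    set a1 := l * g (Function.update x i 1)
    set b0 := l * g (Function.update y i 0)
    set b1 := l * g (Function.update y i 1)
    have hx0 := binary_update hx i (Or.inl rfl)
    have hx1 := binary_update hx i (Or.inr rfl)
    have hy0 := binary_update hy i (Or.inl rfl)
    have hy1 := binary_update hy i (Or.inr rfl)
    have ha : a0 ≤ a1 := mul_le_mul_of_nonneg_left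
      (hmono _ _ hx0 hx1 (update_le_update le_rfl i zero_le_one)) hl.le
    have hb0 : a0 ≤ b0 := mul_le_mul_of_nonneg_left
      (hmono _ _ hx0 hy0 (update_le_update hxy i le_rfl)) hl.le
    have hdiff : a1 - a0 ≤ b1 - b0 := by
      have := hsup i x y hx hy hxy
      have : g (Function.update x i 1) - g (Function.update x i 0) ≤
          g (Function.update y i 1) - g (Function.update y i 0) := this
      simp only [a0, a1, b0, b1]
      nlinarith
    have h1 : Real.exp a1 - Real.exp a0 = Real.exp a0 * (Real.exp (a1 - a0) - 1) := by
      rw [mul_sub, ← Real.exp_add]; ring_nf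
    have h2 : Real.exp b1 - Real.exp b0 = Real.exp b0 * (Real.exp (b1 - b0) - 1) := by
      rw [mul_sub, ← Real.exp_add]; ring_nf
    rw [h1, h2]
    have hA : 0 ≤ Real.exp (a1 - a0) - 1 := by
      have := Real.one_le_exp (by linarith : (0:ℝ) ≤ a1 - a0); linarith
    exact mul_le_mul (Real.exp_le_exp.2 hb0)
      (by have := Real.exp_le_exp.2 hdiff; linarith) hA (Real.exp_pos _).le
  refine ⟨fun x hx => ?_, key⟩
  have := key x x hx hx le_rfl
  have hx0 := binary_update hx i (Or.inl rfl)
  have hx1 := binary_update hx i (Or.inr rfl)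
  have := hmono _ _ hx0 hx1 (update_le_update le_rfl i zero_le_one)
  have := Real.exp_le_exp.2 (mul_le_mul_of_nonneg_left this hl.le)
  linarith
end

section
/- Exponential-moment domination for submodular functions: Let X_1,...,X_n be {0,1}-valued 1-negatively associated random variables and let X_1*,...,X_n* be mutually independent {0,1}-valued random variables where X_i* has the same marginal distribution as X_i. Then for every monotone non-decreasing submodular f : {0,1}^n → ℝ and every λ < 0, E[exp(λ·f(X_1,...,X_n))] ≤ E[exp(λ·f(X_1*,...,X_n*))]. -/
open MeasureTheory ProbabilityTheory Real Finset

/-!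
For `l < 0` the function `g = exp (l * f)` is supermodular on the cube: its marginal gain in
coordinate `i` is `exp (l * f (x with xᵢ = 0)) * (exp (l * Δᵢ f x) - 1)`, a product of a positive
antitone and a nonpositive monotone factor. Averaging coordinate `i` of a function `g` against a
Bernoulli(`pᵢ`) variable, `pᵢ = E Xᵢ`, changes `E g(Y)` by `E[Δᵢ g(Y)] pᵢ - E[Δᵢ g(Y) Yᵢ]`, since `Yᵢ`
is binary. As `Δᵢ g` is monotone and does not involve coordinate `i`, this change is `≥ 0` under
1-negative association and `= 0` under independence; averaging also preserves supermodularity.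
Averaging out every coordinate yields a constant, reached from `E g(X)` by increases and from
`E g(X*)` by equalities.
-/

variable {n : ℕ}

def bernoulliAvg (p : ℝ) (i : Fin n) (g : (Fin n → ℝ) → ℝ) : (Fin n → ℝ) → ℝ :=
  fun x => (1 - p) * g (Function.update x i 0) + p * g (Function.update x i 1)

def bernoulliAvgList (p : Fin n → ℝ) (l : List (Fin n)) (g : (Fin n → ℝ) → ℝ) :
    (Fin n → ℝ) → ℝ :=
  l.foldr (fun i h => bernoulliAvg (p i) i h) g

def marginalGain (i : Fin n) (g : (Fin n → ℝ) → ℝ) (x : Fin n → ℝ) : ℝ :=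
  g (Function.update x i 1) - g (Function.update x i 0)

lemma bernoulliAvgList_cons (p : Fin n → ℝ) (i : Fin n) (l : List (Fin n))
    (g : (Fin n → ℝ) → ℝ) :
    bernoulliAvgList p (i :: l) g = bernoulliAvg (p i) i (bernoulliAvgList p l g) := rfl

lemma BinaryVec.update {x : Fin n → ℝ} (hx : BinaryVec x) (i : Fin n) {c : ℝ}
    (hc : c = 0 ∨ c = 1) : BinaryVec (Function.update x i c) := by
  intro j
  rw [Function.update_apply]
  split_ifs
  exacts [hc, hx j]

lemma update_eq_update_of_eq_off {x y : Fin n → ℝ} {i : Fin n}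
    (h : ∀ j, j ≠ i → x j = y j) (c : ℝ) :
    Function.update x i c = Function.update y i c := by
  funext j
  simp only [Function.update_apply]
  split_ifs with hj
  exacts [rfl, h j hj]

lemma marginalGain_congr (i : Fin n) (g : (Fin n → ℝ) → ℝ) {x y : Fin n → ℝ}
    (h : ∀ j, j ≠ i → x j = y j) : marginalGain i g x = marginalGain i g y := by
  simp only [marginalGain, update_eq_update_of_eq_off h]

lemma bernoulliAvg_sub_self (p : ℝ) (i : Fin n) (g : (Fin n → ℝ) → ℝ) {x : Fin n → ℝ}
    (hx : x i = 0 ∨ x i = 1) :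
    bernoulliAvg p i g x - g x = marginalGain i g x * (p - x i) := by
  unfold bernoulliAvg marginalGain
  rcases hx with hx | hx <;>
  · have hupd : Function.update x i (x i) = x := Function.update_eq_self i x
    rw [hx] at hupd
    rw [hupd, hx]
    ring

lemma measurable_bernoulliAvg {g : (Fin n → ℝ) → ℝ} (hg : Measurable g) (p : ℝ) (i : Fin n) :
    Measurable (bernoulliAvg p i g) :=
  ((hg.comp measurable_update_left).const_mul _).add ((hg.comp measurable_update_left).const_mul _)

lemma measurable_bernoulliAvgList {g : (Fin n → ℝ) → ℝ} (hg : Measurable g) (p : Fin n → ℝ) :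
    ∀ l, Measurable (bernoulliAvgList p l g)
  | [] => hg
  | i :: l => measurable_bernoulliAvg (measurable_bernoulliAvgList hg p l) (p i) i

lemma measurable_marginalGain {g : (Fin n → ℝ) → ℝ} (hg : Measurable g) (i : Fin n) :
    Measurable (marginalGain i g) :=
  (hg.comp measurable_update_left).sub (hg.comp measurable_update_left)

lemma supermodCube_bernoulliAvg {g : (Fin n → ℝ) → ℝ} (hg : SupermodCube g) {p : ℝ}
    (hp0 : 0 ≤ p) (hp1 : p ≤ 1) (j : Fin n) : SupermodCube (bernoulliAvg p j g) := by
  intro i x y hx hy hxy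
  rcases eq_or_ne i j with rfl | hij
  · simp [bernoulliAvg]
  have key : ∀ c : ℝ, c = 0 ∨ c = 1 →
      g (Function.update (Function.update x j c) i 1)
          - g (Function.update (Function.update x j c) i 0) ≤
        g (Function.update (Function.update y j c) i 1)
          - g (Function.update (Function.update y j c) i 0) := fun c hc =>
    hg i _ _ (hx.update j hc) (hy.update j hc) (update_le_update_iff.2 ⟨le_rfl, fun k _ => hxy k⟩)
  have h0 := mul_le_mul_of_nonneg_left (key 0 (.inl rfl)) (sub_nonneg.2 hp1)
  have h1 := mul_le_mul_of_nonneg_left (key 1 (.inr rfl)) hp0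
  simp only [bernoulliAvg, Function.update_comm hij]
  linarith

lemma supermodCube_bernoulliAvgList {g : (Fin n → ℝ) → ℝ} (hg : SupermodCube g)
    {p : Fin n → ℝ} (hp0 : ∀ i, 0 ≤ p i) (hp1 : ∀ i, p i ≤ 1) :
    ∀ l, SupermodCube (bernoulliAvgList p l g)
  | [] => hg
  | i :: l => supermodCube_bernoulliAvg (supermodCube_bernoulliAvgList hg hp0 hp1 l) (hp0 i) (hp1 i) i

lemma bernoulliAvgList_eq_of_eq_off (p : Fin n → ℝ) (g : (Fin n → ℝ) → ℝ) :
    ∀ (l : List (Fin n)) {x y : Fin n → ℝ}, (∀ j, j ∉ l → x j = y j) →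
      bernoulliAvgList p l g x = bernoulliAvgList p l g y
  | [], x, y, h => congrArg g (funext fun j => h j List.not_mem_nil)
  | i :: l, x, y, h => by
    have hc : ∀ c, bernoulliAvgList p l g (Function.update x i c)
        = bernoulliAvgList p l g (Function.update y i c) := fun c =>
      bernoulliAvgList_eq_of_eq_off p g l fun j hj => by
        simp only [Function.update_apply]
        split_ifs with hji
        exacts [rfl, h j (by simp [hji, hj])]
    simp only [bernoulliAvgList_cons, bernoulliAvg, hc]

lemma bernoulliAvgList_finRange_eq (p : Fin n → ℝ) (g : (Fin n → ℝ) → ℝ) (x y : Fin n → ℝ) :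
    bernoulliAvgList p (List.finRange n) g x = bernoulliAvgList p (List.finRange n) g y :=
  bernoulliAvgList_eq_of_eq_off p g _ fun j hj => absurd (List.mem_finRange j) hj

lemma supermodCube_exp_mul {f : (Fin n → ℝ) → ℝ} (hf : MonoCube f) (hsub : SubmodCube f)
    {l : ℝ} (hl : l < 0) : SupermodCube fun x => exp (l * f x) := by
  intro i x y hx hy hxy
  have hx0 := hx.update i (c := 0) (.inl rfl)
  have hy0 := hy.update i (c := 0) (.inl rfl)
  have gain_eq : ∀ z : Fin n → ℝ, exp (l * f (Function.update z i 1))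
      - exp (l * f (Function.update z i 0)) = exp (l * f (Function.update z i 0))
        * (exp (l * (f (Function.update z i 1) - f (Function.update z i 0))) - 1) := fun z => by
    rw [mul_sub, ← exp_add]; ring_nf
  have hprefix : exp (l * f (Function.update y i 0)) ≤ exp (l * f (Function.update x i 0)) :=
    exp_le_exp.2 <| mul_le_mul_of_nonpos_left
      (hf _ _ hx0 hy0 (update_le_update_iff.2 ⟨le_rfl, fun k _ => hxy k⟩)) hl.le
  have hgain : exp (l * (f (Function.update x i 1) - f (Function.update x i 0))) - 1 ≤
      exp (l * (f (Function.update y i 1) - f (Function.update y i 0))) - 1 :=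
    sub_le_sub_right (exp_le_exp.2 (mul_le_mul_of_nonpos_left (hsub i x y hx hy hxy) hl.le)) 1
  have hgain_nonpos : exp (l * (f (Function.update y i 1) - f (Function.update y i 0))) - 1 ≤ 0 :=
    sub_nonpos.2 <| exp_le_one_iff.2 <| mul_nonpos_of_nonpos_of_nonneg hl.le <| sub_nonneg.2 <|
      hf _ _ hy0 (hy.update i (.inr rfl)) (update_le_update_iff'.2 zero_le_one)
  rw [gain_eq, gain_eq]
  calc _ ≤ exp (l * f (Function.update y i 0))
        * (exp (l * (f (Function.update x i 1) - f (Function.update x i 0))) - 1) :=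
        mul_le_mul_of_nonpos_right hprefix (hgain.trans hgain_nonpos)
    _ ≤ _ := mul_le_mul_of_nonneg_left hgain (exp_pos _).le

lemma ProbabilityTheory.iIndepFun.indepFun_of_eq_off {Ω ι : Type*} [MeasurableSpace Ω]
    {μ : Measure Ω} [Fintype ι] [DecidableEq ι] {Y : ι → Ω → ℝ} (hind : iIndepFun Y μ)
    (hY : ∀ i, Measurable (Y i)) {F : (ι → ℝ) → ℝ} (hF : Measurable F) {i : ι}
    (hFi : ∀ x y : ι → ℝ, (∀ j, j ≠ i → x j = y j) → F x = F y) :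
    IndepFun (fun ω => F fun j => Y j ω) (Y i) μ := by
  let extend : (({i}ᶜ : Finset ι) → ℝ) → ι → ℝ := fun v j =>
    if hj : j ∈ ({i}ᶜ : Finset ι) then v ⟨j, hj⟩ else 0
  have hextend : Measurable extend := measurable_pi_lambda _ fun j => by
    by_cases hj : j ∈ ({i}ᶜ : Finset ι)
    · simp only [extend, dif_pos hj]
      exact measurable_pi_apply _
    · simp only [extend, dif_neg hj]
      exact measurable_const
  convert (hind.indepFun_finset {i}ᶜ {i} disjoint_compl_left hY).comp (hF.comp hextend)
    (measurable_pi_apply ⟨i, mem_singleton_self i⟩) using 1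
  · funext ω
    exact hFi _ _ fun j hj => by simp [extend, hj]
  · rfl

section Integrals

variable {Ω : Type*} [MeasurableSpace Ω] {μ : Measure Ω} {Y : Fin n → Ω → ℝ}

lemma integral_mem_Icc_of_binary [IsProbabilityMeasure μ] {Z : Ω → ℝ}
    (hZ : ∀ ω, Z ω = 0 ∨ Z ω = 1) : ∫ ω, Z ω ∂μ ∈ Set.Icc 0 1 := by
  have hnonneg : ∀ ω, 0 ≤ Z ω := fun ω => by rcases hZ ω with h | h <;> simp [h]
  refine ⟨integral_nonneg hnonneg, ?_⟩
  calc ∫ ω, Z ω ∂μ ≤ ∫ _, (1 : ℝ) ∂μ :=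
        integral_mono_of_nonneg (ae_of_all _ hnonneg) (integrable_const 1)
          (ae_of_all _ fun ω => by rcases hZ ω with h | h <;> simp [h])
    _ = 1 := by simp

variable [IsFiniteMeasure μ]

lemma integrable_comp_of_binary (hY : ∀ i, Measurable (Y i))
    (hb : ∀ i ω, Y i ω = 0 ∨ Y i ω = 1) {h : (Fin n → ℝ) → ℝ} (hh : Measurable h) :
    Integrable (fun ω => h fun j => Y j ω) μ := by
  have hfin : (Set.range fun ω => h fun j => Y j ω).Finite :=
    ((Set.Finite.pi fun _ => Set.toFinite ({0, 1} : Set ℝ)).image h).subset <| by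
      rintro _ ⟨ω, rfl⟩
      exact ⟨_, fun j _ => hb j ω, rfl⟩
  obtain ⟨C, hC⟩ := (hfin.image norm).bddAbove
  exact Integrable.of_bound (hh.comp (measurable_pi_lambda _ hY)).aestronglyMeasurable C
    (ae_of_all _ fun ω => hC ⟨_, ⟨ω, rfl⟩, rfl⟩)

lemma integral_bernoulliAvg_sub (hY : ∀ i, Measurable (Y i))
    (hb : ∀ i ω, Y i ω = 0 ∨ Y i ω = 1) {g : (Fin n → ℝ) → ℝ} (hg : Measurable g)
    (p : ℝ) (i : Fin n) :
    ∫ ω, bernoulliAvg p i g (fun j => Y j ω) ∂μ - ∫ ω, g (fun j => Y j ω) ∂μ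
      = (∫ ω, marginalGain i g (fun j => Y j ω) ∂μ) * p
        - ∫ ω, marginalGain i g (fun j => Y j ω) * Y i ω ∂μ := by
  have hΔ := measurable_marginalGain hg i
  rw [← integral_sub (integrable_comp_of_binary hY hb (measurable_bernoulliAvg hg p i))
      (integrable_comp_of_binary hY hb hg),
    ← integral_mul_const, ← integral_sub ((integrable_comp_of_binary hY hb hΔ).mul_const p)
      (integrable_comp_of_binary hY hb (h := fun x => marginalGain i g x * x i)
        (hΔ.mul (measurable_pi_apply i)))]
  refine integral_congr_ae (ae_of_all _ fun ω => ?_)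
  dsimp only
  rw [bernoulliAvg_sub_self p i g (x := fun j => Y j ω) (hb i ω)]
  ring

lemma integral_le_integral_bernoulliAvg_of_oneNA (hY : ∀ i, Measurable (Y i))
    (hb : ∀ i ω, Y i ω = 0 ∨ Y i ω = 1) (hNA : OneNA μ Y) {g : (Fin n → ℝ) → ℝ}
    (hg : Measurable g) (hsup : SupermodCube g) (i : Fin n) :
    ∫ ω, g (fun j => Y j ω) ∂μ ≤
      ∫ ω, bernoulliAvg (∫ ω, Y i ω ∂μ) i g (fun j => Y j ω) ∂μ := by
  have hcov := hNA i (marginalGain i g) id (measurable_marginalGain hg i) (hsup i)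
    (fun _ _ => marginalGain_congr i g) measurable_id monotone_id
  have := integral_bernoulliAvg_sub (μ := μ) hY hb hg (∫ ω, Y i ω ∂μ) i
  simp only [id] at hcov
  linarith

lemma integral_bernoulliAvg_eq_of_iIndepFun (hY : ∀ i, Measurable (Y i))
    (hb : ∀ i ω, Y i ω = 0 ∨ Y i ω = 1) (hind : iIndepFun Y μ) {g : (Fin n → ℝ) → ℝ}
    (hg : Measurable g) (i : Fin n) :
    ∫ ω, bernoulliAvg (∫ ω, Y i ω ∂μ) i g (fun j => Y j ω) ∂μ = ∫ ω, g (fun j => Y j ω) ∂μ := by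
  have hΔ := measurable_marginalGain hg i
  have hprod := (hind.indepFun_of_eq_off hY hΔ fun _ _ => marginalGain_congr i g)
    |>.integral_fun_mul_eq_mul_integral
      (hΔ.comp (measurable_pi_lambda _ hY)).aestronglyMeasurable (hY i).aestronglyMeasurable
  have := integral_bernoulliAvg_sub (μ := μ) hY hb hg (∫ ω, Y i ω ∂μ) i
  rw [hprod, sub_self] at this
  exact sub_eq_zero.1 this

lemma integral_le_integral_bernoulliAvgList_of_oneNA (hY : ∀ i, Measurable (Y i))
    (hb : ∀ i ω, Y i ω = 0 ∨ Y i ω = 1) (hNA : OneNA μ Y) {g : (Fin n → ℝ) → ℝ}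
    (hg : Measurable g) (hsup : SupermodCube g) {p : Fin n → ℝ}
    (hp : ∀ i, ∫ ω, Y i ω ∂μ = p i) (hp0 : ∀ i, 0 ≤ p i) (hp1 : ∀ i, p i ≤ 1) :
    ∀ l, ∫ ω, g (fun j => Y j ω) ∂μ ≤ ∫ ω, bernoulliAvgList p l g (fun j => Y j ω) ∂μ
  | [] => le_rfl
  | i :: l => by
    rw [bernoulliAvgList_cons, ← hp i]
    exact (integral_le_integral_bernoulliAvgList_of_oneNA hY hb hNA hg hsup hp hp0 hp1 l).trans
      (integral_le_integral_bernoulliAvg_of_oneNA hY hb hNA (measurable_bernoulliAvgList hg p l)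
        (supermodCube_bernoulliAvgList hsup hp0 hp1 l) i)

lemma integral_bernoulliAvgList_eq_of_iIndepFun (hY : ∀ i, Measurable (Y i))
    (hb : ∀ i ω, Y i ω = 0 ∨ Y i ω = 1) (hind : iIndepFun Y μ) {g : (Fin n → ℝ) → ℝ}
    (hg : Measurable g) {p : Fin n → ℝ} (hp : ∀ i, ∫ ω, Y i ω ∂μ = p i) :
    ∀ l, ∫ ω, bernoulliAvgList p l g (fun j => Y j ω) ∂μ = ∫ ω, g (fun j => Y j ω) ∂μ
  | [] => rfl
  | i :: l => by
    rw [bernoulliAvgList_cons, ← hp i,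
      integral_bernoulliAvg_eq_of_iIndepFun hY hb hind (measurable_bernoulliAvgList hg p l) i]
    exact integral_bernoulliAvgList_eq_of_iIndepFun hY hb hind hg hp l

end Integrals

/-- Exponential-moment domination for submodular functions under 1-negative association. -/
theorem exp_moment_domination_submodular {Ω : Type*} [MeasurableSpace Ω] (μ : Measure Ω)
    [IsProbabilityMeasure μ] {n : ℕ} (X Xstar : Fin n → Ω → ℝ)
    (hX : ∀ i, Measurable (X i)) (hbin : ∀ i ω, X i ω = 0 ∨ X i ω = 1)
    (hNA : OneNA μ X)
    (hXstar : ∀ i, Measurable (Xstar i)) (hbinstar : ∀ i ω, Xstar i ω = 0 ∨ Xstar i ω = 1)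
    (hindep : iIndepFun Xstar μ)
    (hmarg : ∀ i, Measure.map (Xstar i) μ = Measure.map (X i) μ) :
    ∀ (f : (Fin n → ℝ) → ℝ), Measurable f → MonoCube f → SubmodCube f →
      ∀ l : ℝ, l < 0 →
        ∫ ω, Real.exp (l * f (fun j => X j ω)) ∂μ ≤
          ∫ ω, Real.exp (l * f (fun j => Xstar j ω)) ∂μ := by
  intro f hf hmono hsub l hl
  set g : (Fin n → ℝ) → ℝ := fun x => exp (l * f x)
  have hg : Measurable g := (hf.const_mul l).exp
  set p : Fin n → ℝ := fun i => ∫ ω, X i ω ∂μ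
  have hp := fun i => integral_mem_Icc_of_binary (μ := μ) (hbin i)
  have hpstar : ∀ i, ∫ ω, Xstar i ω ∂μ = p i := fun i =>
    (IdentDistrib.integral_eq ⟨(hXstar i).aemeasurable, (hX i).aemeasurable, hmarg i⟩ :)
  calc ∫ ω, g (fun j => X j ω) ∂μ
      ≤ ∫ ω, bernoulliAvgList p (List.finRange n) g (fun j => X j ω) ∂μ :=
        integral_le_integral_bernoulliAvgList_of_oneNA hX hbin hNA hg
          (supermodCube_exp_mul hmono hsub hl) (fun _ => rfl) (fun i => (hp i).1)
          (fun i => (hp i).2) _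
    _ = ∫ ω, bernoulliAvgList p (List.finRange n) g (fun j => Xstar j ω) ∂μ :=
        integral_congr_ae (ae_of_all _ fun ω => bernoulliAvgList_finRange_eq p g _ _)
    _ = ∫ ω, g (fun j => Xstar j ω) ∂μ :=
        integral_bernoulliAvgList_eq_of_iIndepFun hXstar hbinstar hindep hg hpstar _
end
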